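/- arXiv:1411.1453 — 2 statements merged into one kernel-verified Lean document; each statement's English description precedes it below -/
import Mathlib

section
/- Let δ > 0 and let J and k be natural numbers with 1 ≤ k ≤ J. Define α_j = 2^{-|j-k|δ} + (1 - 2^{-(J-k)δ}) 2^{-(J-j)δ} for 1 ≤ j ≤ J. Then: (a) α_J = 1; (b) α_k ≥ 1, so α_j dominates the Kronecker delta sequence δ_{jk}; (c) the sequence is slowly varying, i.e. 2^{-δ} ≤ α_j/α_{j-1} ≤ 2^{δ} for all 2 ≤ j ≤ J; and (d) the sum ∑_{j=1}^{J} α_j is bounded by a constant depending only on δ (e.g., by 4/(1 - 2^{-δ})), uniformly in k and J. -/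
/-!
With `q = 2^(-δ)`, the sequence is `α j = q^|j - k| + (1 - q^(J - k)) q^(J - j)`, a sum of two
geometric profiles. The correction factor `1 - q^(J - k)` is chosen so that the two terms add up
to `1` at `j = J`. Each profile changes by a factor between `q` and `q⁻¹` from one index to the
next, hence so does their sum, and each profile sums to at most a geometric series, i.e. to
`O(1 / (1 - q))`.
-/

open Finset

lemma rpow_neg_natCast_mul {b : ℝ} (hb : 0 ≤ b) (n : ℕ) (δ : ℝ) :
    b ^ (-(n : ℝ) * δ) = (b ^ (-δ)) ^ n := by
  rw [← Real.rpow_natCast, ← Real.rpow_mul hb]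
  ring_nf

lemma sum_pow_le_of_injOn {q : ℝ} (hq0 : 0 ≤ q) (hq1 : q < 1) {t : Finset ℕ} {f : ℕ → ℕ}
    (hf : Set.InjOn f t) : ∑ j ∈ t, q ^ f j ≤ (1 - q)⁻¹ := by
  rw [← sum_image hf, ← tsum_geometric_of_lt_one hq0 hq1]
  exact (summable_geometric_of_lt_one hq0 hq1).sum_le_tsum _ fun i _ => pow_nonneg hq0 i

lemma sum_Icc_pow_natAbs_sub_le {q : ℝ} (hq0 : 0 ≤ q) (hq1 : q < 1) {k J : ℕ} (hkJ : k ≤ J) :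
    ∑ j ∈ Icc 1 J, q ^ ((j : ℤ) - k).natAbs ≤ 2 * (1 - q)⁻¹ := by
  rw [show Icc 1 J = Ioc 0 J from Icc_add_one_left_eq_Ioc 0 J, ← sum_Ioc_consecutive _ k.zero_le hkJ, two_mul]
  gcongr <;>
  · refine sum_pow_le_of_injOn hq0 hq1 fun x hx y hy h => ?_
    simp only [coe_Ioc, Set.mem_Ioc] at hx hy
    omega

/-- The sequence of the statement, written with `q = 2^(-δ)` and `c = 1 - 2^(-(J - k) δ)`. -/
def deltaMajorant (q c : ℝ) (J k j : ℕ) : ℝ :=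
  q ^ ((j : ℤ) - k).natAbs + c * q ^ (J - j)

section deltaMajorant

variable {q c : ℝ} {J k : ℕ}

lemma deltaMajorant_last (hkJ : k ≤ J) : deltaMajorant q (1 - q ^ (J - k)) J k J = 1 := by
  have : ((J : ℤ) - k).natAbs = J - k := by omega
  simp [deltaMajorant, this]

lemma one_le_deltaMajorant_self (hq : 0 ≤ q) (hc : 0 ≤ c) : 1 ≤ deltaMajorant q c J k k := by
  simp only [deltaMajorant, sub_self, Int.natAbs_zero, pow_zero, le_add_iff_nonneg_right]
  positivity

lemma deltaMajorant_pos (hq : 0 < q) (hc : 0 ≤ c) (j : ℕ) : 0 < deltaMajorant q c J k j := by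
  unfold deltaMajorant
  positivity

lemma mul_pow_add_mul_pow_le (hq0 : 0 ≤ q) (hq1 : q ≤ 1) (hc : 0 ≤ c) {m m' n n' : ℕ}
    (hm : m ≤ m' + 1) (hn : n ≤ n' + 1) : q * (q ^ m' + c * q ^ n') ≤ q ^ m + c * q ^ n := by
  have hm' : q ^ (m' + 1) ≤ q ^ m := pow_le_pow_of_le_one hq0 hq1 hm
  have hn' : q ^ (n' + 1) ≤ q ^ n := pow_le_pow_of_le_one hq0 hq1 hn
  rw [pow_succ'] at hm' hn'
  nlinarith

lemma mul_deltaMajorant_pred_le (hq0 : 0 ≤ q) (hq1 : q ≤ 1) (hc : 0 ≤ c) {j : ℕ}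
    (hj : 1 ≤ j) (hjJ : j ≤ J) :
    q * deltaMajorant q c J k (j - 1) ≤ deltaMajorant q c J k j :=
  mul_pow_add_mul_pow_le hq0 hq1 hc (by omega) (by omega)

lemma mul_deltaMajorant_le_pred (hq0 : 0 ≤ q) (hq1 : q ≤ 1) (hc : 0 ≤ c) {j : ℕ}
    (hj : 1 ≤ j) (hjJ : j ≤ J) :
    q * deltaMajorant q c J k j ≤ deltaMajorant q c J k (j - 1) :=
  mul_pow_add_mul_pow_le hq0 hq1 hc (by omega) (by omega)

lemma sum_deltaMajorant_le (hq0 : 0 ≤ q) (hq1 : q < 1) (hc1 : c ≤ 1)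
    (hkJ : k ≤ J) : ∑ j ∈ Icc 1 J, deltaMajorant q c J k j ≤ 3 / (1 - q) := by
  have hprofile : ∑ j ∈ Icc 1 J, c * q ^ (J - j) ≤ (1 - q)⁻¹ := by
    calc ∑ j ∈ Icc 1 J, c * q ^ (J - j) ≤ ∑ j ∈ Icc 1 J, q ^ (J - j) := by
          gcongr with j
          exact mul_le_of_le_one_left (pow_nonneg hq0 _) hc1
      _ ≤ (1 - q)⁻¹ := sum_pow_le_of_injOn hq0 hq1 fun x hx y hy h => by
          simp only [coe_Icc, Set.mem_Icc] at hx hy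
          omega
  rw [div_eq_mul_inv]
  unfold deltaMajorant
  linarith [sum_add_distrib (s := Icc 1 J) (f := fun j => q ^ ((j : ℤ) - k).natAbs)
    (g := fun j => c * q ^ (J - j)), sum_Icc_pow_natAbs_sub_le hq0 hq1 hkJ]

end deltaMajorant

lemma le_div_and_div_le_inv {q a b : ℝ} (hq : 0 < q) (hb : 0 < b) (hab : q * b ≤ a)
    (hba : q * a ≤ b) : q ≤ a / b ∧ a / b ≤ q⁻¹ := by
  refine ⟨(le_div_iff₀ hb).2 hab, (div_le_iff₀ hb).2 ?_⟩
  rw [inv_mul_eq_div, le_div_iff₀ hq, mul_comm]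
  exact hba

/-- Slowly varying majorant of the Kronecker delta sequence. -/
theorem stmt_0 (δ : ℝ) (hδ : 0 < δ) (J k : ℕ) (hk1 : 1 ≤ k) (hkJ : k ≤ J)
    (α : ℕ → ℝ)
    (hα : ∀ j, 1 ≤ j → j ≤ J →
      α j = (2 : ℝ) ^ (-(((|(j : ℤ) - (k : ℤ)| : ℤ) : ℝ)) * δ)
        + (1 - (2 : ℝ) ^ (-(((J : ℝ) - (k : ℝ))) * δ)) * (2 : ℝ) ^ (-(((J : ℝ) - (j : ℝ))) * δ)) :
    α J = 1 ∧
    1 ≤ α k ∧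
    (∀ j, 2 ≤ j → j ≤ J →
      (2 : ℝ) ^ (-δ) ≤ α j / α (j - 1) ∧ α j / α (j - 1) ≤ (2 : ℝ) ^ δ) ∧
    (∑ j ∈ Finset.Icc 1 J, α j) ≤ 4 / (1 - (2 : ℝ) ^ (-δ)) := by
  set q : ℝ := (2 : ℝ) ^ (-δ)
  have hq0 : 0 < q := by positivity
  have hq1 : q < 1 := Real.rpow_lt_one_of_one_lt_of_neg one_lt_two (neg_neg_of_pos hδ)
  have hc0 : 0 ≤ 1 - q ^ (J - k) := sub_nonneg.2 (pow_le_one₀ hq0.le hq1.le)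
  have hc1 : 1 - q ^ (J - k) ≤ 1 := sub_le_self _ (pow_nonneg hq0.le _)
  have hαm : ∀ j, 1 ≤ j → j ≤ J → α j = deltaMajorant q (1 - q ^ (J - k)) J k j := by
    intro j hj hjJ
    rw [hα j hj hjJ, deltaMajorant, ← Nat.cast_sub hjJ, ← Nat.cast_sub hkJ, ← Int.natCast_natAbs,
      Int.cast_natCast]
    simp only [rpow_neg_natCast_mul zero_le_two, q]
  refine ⟨by rw [hαm J (hk1.trans hkJ) le_rfl, deltaMajorant_last hkJ],
    by rw [hαm k hk1 hkJ]; exact one_le_deltaMajorant_self hq0.le hc0, fun j hj hjJ => ?_, ?_⟩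
  · have hq_inv : (2 : ℝ) ^ δ = q⁻¹ := by simp only [q, Real.rpow_neg zero_le_two, inv_inv]
    rw [hαm j (by omega) hjJ, hαm (j - 1) (by omega) (by omega), hq_inv]
    exact le_div_and_div_le_inv hq0 (deltaMajorant_pos hq0 hc0 _)
      (mul_deltaMajorant_pred_le hq0.le hq1.le hc0 (by omega) hjJ)
      (mul_deltaMajorant_le_pred hq0.le hq1.le hc0 (by omega) hjJ)
  · rw [sum_congr rfl fun j hj => hαm j (mem_Icc.1 hj).1 (mem_Icc.1 hj).2]
    exact (sum_deltaMajorant_le hq0.le hq1 hc1 hkJ).trans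
      (div_le_div_of_nonneg_right (by norm_num) (sub_pos.2 hq1).le)
end

section
/- Let g : ℝ → ℝ satisfy, for every N ∈ ℕ, a bound |g(x)| ≤ C_N (1 + |x|)^{-N}. Let λ ≥ 1, let k ∈ [λ/2, 2λ], μ ∈ [k, k+1), and τ ∈ ℝ with −τ ∈ [λ/4, 4λ]. Then max(1, k^{-1}|k² − μ²|) · (1 + |k − √(−λτ)|) · |g(τ + λ^{-1}μ²)| ≤ C (1 + |τ + λ^{-1}μ²|)^{-2}, where C depends only on finitely many of the constants C_N and not on λ, k, μ, τ. -/
/-!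
Both weights are bounded by a multiple of `1 + |u|`, where `u = τ + λ⁻¹μ²`. The first is at most
`4` since `μ² - k² < 2k + 1`. For the second, write `s = √(-λτ)`; then `s ≥ λ/2`, so `k + s ≥ λ`,
and `k² - s² = λu - (μ² - k²)`, whence `λ|k - s| ≤ |k² - s²| ≤ λ|u| + 5λ`. The decay bound with
`N = 3` then absorbs the factor `1 + |u|` and leaves `(1 + |u|)⁻²`.
-/

open Set

lemma max_one_inv_mul_abs_sq_sub_sq_le {k μ : ℝ} (hk : 1 / 2 ≤ k) (hμ : μ ∈ Ico k (k + 1)) :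
    max 1 (k⁻¹ * |k ^ 2 - μ ^ 2|) ≤ 4 := by
  obtain ⟨hkμ, hμk⟩ := hμ
  have hk0 : 0 < k := by linarith
  refine max_le (by norm_num) ?_
  rw [abs_sub_comm, abs_of_nonneg (by nlinarith), inv_mul_le_iff₀ hk0]
  nlinarith

lemma half_le_sqrt_neg_mul {lam τ : ℝ} (hlam : 0 ≤ lam) (hτ : lam / 4 ≤ -τ) :
    lam / 2 ≤ √(-lam * τ) :=
  Real.le_sqrt_of_sq_le (by nlinarith)

lemma one_add_abs_sub_sqrt_le {lam k μ τ : ℝ} (hlam : 1 ≤ lam) (hk : k ∈ Icc (lam / 2) (2 * lam))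
    (hμ : μ ∈ Ico k (k + 1)) (hτ : lam / 4 ≤ -τ) :
    1 + |k - √(-lam * τ)| ≤ 6 * (1 + |τ + lam⁻¹ * μ ^ 2|) := by
  obtain ⟨hk1, hk2⟩ := hk
  obtain ⟨hkμ, hμk⟩ := hμ
  set s := √(-lam * τ)
  set u := τ + lam⁻¹ * μ ^ 2
  have hlam0 : 0 < lam := by linarith
  have hs : lam / 2 ≤ s := half_le_sqrt_neg_mul hlam0.le hτ
  have hs2 : s ^ 2 = -lam * τ := Real.sq_sqrt (by nlinarith)
  have hdiff : k ^ 2 - s ^ 2 = lam * u - (μ ^ 2 - k ^ 2) := by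
    simp only [u, hs2]
    field_simp
    ring
  have hsq : |k - s| * (k + s) ≤ lam * |u| + 5 * lam :=
    calc |k - s| * (k + s) = |k ^ 2 - s ^ 2| := by
          rw [← abs_of_nonneg (by linarith : 0 ≤ k + s), ← abs_mul]; ring_nf
      _ ≤ |lam * u| + |μ ^ 2 - k ^ 2| := hdiff ▸ abs_sub _ _
      _ ≤ lam * |u| + 5 * lam := by
          rw [abs_mul, abs_of_pos hlam0, abs_of_nonneg (by nlinarith : 0 ≤ μ ^ 2 - k ^ 2)]
          nlinarith
  have hks : |k - s| ≤ |u| + 5 := by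
    have : |k - s| * lam ≤ |k - s| * (k + s) := by gcongr; linarith
    nlinarith [abs_nonneg (k - s)]
  linarith [abs_nonneg u]

lemma mul_abs_le_div_sq_of_le_div_cube {w A C t y : ℝ} (hw0 : 0 ≤ w) (hw : w ≤ A * (1 + |t|))
    (hy : |y| ≤ C / (1 + |t|) ^ 3) :
    w * |y| ≤ A * C / (1 + |t|) ^ 2 := by
  calc w * |y| ≤ A * (1 + |t|) * (C / (1 + |t|) ^ 3) :=
        mul_le_mul hw hy (abs_nonneg y) (hw0.trans hw)
    _ = A * C / (1 + |t|) ^ 2 := by field_simp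

/-- Rapid decay absorbs the weights `max(1, k⁻¹|k²−μ²|)` and `⟨k − √(−λτ)⟩`. -/
theorem stmt_7 (Cg : ℕ → ℝ) :
    ∃ C : ℝ, 0 < C ∧
      ∀ g : ℝ → ℝ, (∀ N : ℕ, ∀ x : ℝ, |g x| ≤ Cg N / (1 + |x|) ^ N) →
        ∀ lam k μ τ : ℝ, 1 ≤ lam →
          k ∈ Set.Icc (lam / 2) (2 * lam) → μ ∈ Set.Ico k (k + 1) →
          -τ ∈ Set.Icc (lam / 4) (4 * lam) →
          max 1 (k⁻¹ * |k ^ 2 - μ ^ 2|) * (1 + |k - Real.sqrt (-lam * τ)|)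
              * |g (τ + lam⁻¹ * μ ^ 2)|
            ≤ C / (1 + |τ + lam⁻¹ * μ ^ 2|) ^ 2 := by
  refine ⟨24 * max (Cg 3) 1, by positivity, ?_⟩
  intro g hg lam k μ τ hlam hk hμ hτ
  have hweight : max 1 (k⁻¹ * |k ^ 2 - μ ^ 2|) * (1 + |k - √(-lam * τ)|)
      ≤ 24 * (1 + |τ + lam⁻¹ * μ ^ 2|) := by
    have h₁ := max_one_inv_mul_abs_sq_sub_sq_le (by linarith [hk.1]) hμ
    have h₂ := one_add_abs_sub_sqrt_le hlam hk hμ hτ.1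
    calc _ ≤ 4 * (6 * (1 + |τ + lam⁻¹ * μ ^ 2|)) := by gcongr
      _ = _ := by ring
  calc _ ≤ 24 * Cg 3 / (1 + |τ + lam⁻¹ * μ ^ 2|) ^ 2 :=
        mul_abs_le_div_sq_of_le_div_cube (by positivity) hweight (hg 3 _)
    _ ≤ _ := by gcongr; exact le_max_left _ _
end
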